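/- On the Iwasawa Lie algebra (dφ¹ = dφ² = 0, dφ³ = -φ¹∧φ²), the almost complex structure defined by declaring ω¹ = φ¹, ω² = φ² + φ̄³, ω³ = φ³ to be (1,0)-forms is well-defined and has Nijenhuis rank exactly 1. -/

import Mathlib

open Matrix

noncomputable section

/-- Complexification of a real matrix. -/
def cplx {n : ℕ} (A : Matrix (Fin n) (Fin n) ℝ) : Matrix (Fin n) (Fin n) ℂ :=
  A.map Complex.ofReal

/-- The projector `(1/2)(Id + iJ)` of `V ⊗ ℂ` onto the `-i`-eigenspace `V^{0,1}` of the
complexified almost complex structure `J`. -/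
def P01 {n : ℕ} (J : Matrix (Fin n) (Fin n) ℝ) : Matrix (Fin n) (Fin n) ℂ :=
  (2⁻¹ : ℂ) • (1 + Complex.I • cplx J)

/-- The `(0,2)`-part of a complex 2-form `ω` (written as an antisymmetric matrix in the
real basis) with respect to the bigrading induced by `J`: `ω^{0,2}(x,y) = ω(P01 x, P01 y)`. -/
def proj02 {n : ℕ} (J : Matrix (Fin n) (Fin n) ℝ) (ω : Matrix (Fin n) (Fin n) ℂ) :
    Matrix (Fin n) (Fin n) ℂ :=
  (P01 J)ᵀ * ω * P01 J

/-- The Chevalley–Eilenberg differential on complex 1-forms, determined by its values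
`Dd r = d e^r` on the dual basis: `d(Σ α_r e^r) = Σ α_r · (d e^r)`. -/
def dC {n : ℕ} (Dd : Fin n → Matrix (Fin n) (Fin n) ℝ) (α : Fin n → ℂ) :
    Matrix (Fin n) (Fin n) ℂ :=
  ∑ r, α r • cplx (Dd r)

/-- The Chevalley–Eilenberg differential on real 1-forms, as a linear map. -/
def dR {n : ℕ} (Dd : Fin n → Matrix (Fin n) (Fin n) ℝ) :
    (Fin n → ℝ) →ₗ[ℝ] Matrix (Fin n) (Fin n) ℝ :=
  ∑ r, (LinearMap.proj r : (Fin n → ℝ) →ₗ[ℝ] ℝ).smulRight (Dd r)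

/-- The rank of the Nijenhuis tensor of the almost complex structure `J`: the complex
dimension of the image of `μ̄ = π^{0,2} ∘ d` on `(1,0)`-forms.  A complex covector `α` is
of type `(1,0)` iff it annihilates `V^{0,1}`, i.e. `α ∘ P01 = 0`. -/
def nijRank {n : ℕ} (Dd : Fin n → Matrix (Fin n) (Fin n) ℝ)
    (J : Matrix (Fin n) (Fin n) ℝ) : ℕ :=
  Module.finrank ℂ (Submodule.span ℂ
    {ω : Matrix (Fin n) (Fin n) ℂ |
      ∃ α : Fin n → ℂ, Matrix.vecMul α (P01 J) = 0 ∧ ω = proj02 J (dC Dd α)})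

/-- The 2-form `e^a ∧ e^b`, as an antisymmetric matrix. -/
def wR (a b : Fin 6) : Matrix (Fin 6) (Fin 6) ℝ :=
  fun p q => (if p = a ∧ q = b then 1 else 0) - (if p = b ∧ q = a then 1 else 0)

/-- The wedge product of two complex covectors, as an antisymmetric matrix. -/
def wedgeC {n : ℕ} (α β : Fin n → ℂ) : Matrix (Fin n) (Fin n) ℂ :=
  fun p q => α p * β q - α q * β p


/-!
A complex covector `α` is of type `(1,0)` iff `α J = i α`. Since `J` is real, conjugates of
`(1,0)`-forms are then fixed by `P01`, and `π^{0,2}(u ∧ v) = (u P01) ∧ (v P01)`. Only `e⁵, e⁶` have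
a differential, and `dα = -½(α₄ - iα₅) φ¹∧φ² - ½(α₄ + iα₅) φ̄¹∧φ̄²`. Under `π^{0,2}` the first
term dies because `φ¹` is of type `(1,0)`, while `φ̄² = ω̄² - ω³` projects to `ω̄²`. So the image of
`μ̄` lies on the line through `φ̄¹ ∧ ω̄² ≠ 0`, and `μ̄ ω² = -φ̄¹ ∧ ω̄²` spans it.
-/

open Complex

section AlmostComplex

variable {n : ℕ} (J : Matrix (Fin n) (Fin n) ℝ)

lemma star_vecMul_cplx (α : Fin n → ℂ) : star (α ᵥ* cplx J) = star α ᵥ* cplx J := by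
  ext j
  simp [vecMul, dotProduct, cplx]

lemma vecMul_P01 (α : Fin n → ℂ) : α ᵥ* P01 J = (2⁻¹ : ℂ) • (α + I • α ᵥ* cplx J) := by
  rw [P01, vecMul_smul, vecMul_add, vecMul_one, vecMul_smul]

lemma vecMul_P01_eq_zero_iff (α : Fin n → ℂ) : α ᵥ* P01 J = 0 ↔ α ᵥ* cplx J = I • α := by
  rw [vecMul_P01, smul_eq_zero, or_iff_right (by norm_num)]
  constructor <;> intro h
  · linear_combination (norm := module) (-I) • h + I_sq • α ᵥ* cplx J
  · rw [h]; linear_combination (norm := module) I_sq • α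

lemma star_vecMul_P01 {α : Fin n → ℂ} (h : α ᵥ* P01 J = 0) : star α ᵥ* P01 J = star α := by
  rw [vecMul_P01_eq_zero_iff] at h
  have hbar : star α ᵥ* cplx J = -I • star α := by
    rw [← star_vecMul_cplx, h, star_smul]; simp
  rw [vecMul_P01, hbar]
  linear_combination (norm := module) (-2⁻¹ : ℂ) • I_sq • star α

lemma proj02_wedgeC (u v : Fin n → ℂ) :
    proj02 J (wedgeC u v) = wedgeC (u ᵥ* P01 J) (v ᵥ* P01 J) := by
  have hvv (x y : Fin n → ℂ) :
      proj02 J (vecMulVec x y) = vecMulVec (x ᵥ* P01 J) (y ᵥ* P01 J) := by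
    rw [proj02, mul_vecMulVec, vecMulVec_mul, mulVec_transpose]
  have hw (x y : Fin n → ℂ) : wedgeC x y = vecMulVec x y - vecMulVec y x := by
    ext p q; simp [wedgeC, vecMulVec_apply, mul_comm]
  rw [hw, hw, proj02, Matrix.mul_sub, Matrix.sub_mul, ← proj02, ← proj02, hvv, hvv]

lemma proj02_add (X Y : Matrix (Fin n) (Fin n) ℂ) :
    proj02 J (X + Y) = proj02 J X + proj02 J Y := by
  simp only [proj02, Matrix.mul_add, Matrix.add_mul]

lemma proj02_smul (c : ℂ) (X : Matrix (Fin n) (Fin n) ℂ) :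
    proj02 J (c • X) = c • proj02 J X := by
  simp only [proj02, Matrix.mul_smul, Matrix.smul_mul]

end AlmostComplex

lemma finrank_span_eq_one_of_subset_of_mem {K V : Type*} [DivisionRing K] [AddCommGroup V]
    [Module K V] {s : Set V} {w : V} (hw : w ≠ 0) (hs : s ⊆ K ∙ w) (hmem : w ∈ Submodule.span K s) :
    Module.finrank K (Submodule.span K s) = 1 := by
  rw [le_antisymm (Submodule.span_le.2 hs) ((Submodule.span_singleton_le_iff_mem _ _).2 hmem)]
  exact finrank_span_singleton hw

section Iwasawa

def φ₁ : Fin 6 → ℂ := ![1, I, 0, 0, 0, 0]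
def φ₂ : Fin 6 → ℂ := ![0, 0, 1, I, 0, 0]
def φ₃ : Fin 6 → ℂ := ![0, 0, 0, 0, 1, I]

def ω₂ : Fin 6 → ℂ := ![0, 0, 1, I, 1, -I]

lemma star_ω₂ : star ω₂ = star φ₂ + φ₃ := by
  ext j; fin_cases j <;> simp [ω₂, φ₂, φ₃]

def iwasawaD : Fin 6 → Matrix (Fin 6) (Fin 6) ℝ :=
  ![0, 0, 0, 0, -(wR 0 2) + wR 1 3, -(wR 0 3) - wR 1 2]

/-- `e⁵, e⁶` are the real and imaginary parts of `φ³`, and `dφ³ = -φ¹ ∧ φ²`. -/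
lemma dC_iwasawaD (α : Fin 6 → ℂ) :
    dC iwasawaD α = (-(α 4 - I * α 5) / 2) • wedgeC φ₁ φ₂
      + (-(α 4 + I * α 5) / 2) • wedgeC (star φ₁) (star φ₂) := by
  ext p q
  fin_cases p <;> fin_cases q <;>
    simp [dC, Fin.sum_univ_six, iwasawaD, cplx, wR, wedgeC, φ₁, φ₂] <;> ring_nf <;> simp [I_sq]

lemma proj02_dC_iwasawaD {J : Matrix (Fin 6) (Fin 6) ℝ} (h₁ : φ₁ ᵥ* P01 J = 0)
    (h₂ : ω₂ ᵥ* P01 J = 0) (h₃ : φ₃ ᵥ* P01 J = 0) (α : Fin 6 → ℂ) :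
    proj02 J (dC iwasawaD α) = (-(α 4 + I * α 5) / 2) • wedgeC (star φ₁) (star ω₂) := by
  have hstar₁ : star φ₁ ᵥ* P01 J = star φ₁ := star_vecMul_P01 J h₁
  have hstar₂ : star φ₂ ᵥ* P01 J = star ω₂ := by
    rw [← add_sub_cancel_right (star φ₂) φ₃, ← star_ω₂, sub_vecMul, star_vecMul_P01 J h₂, h₃,
      sub_zero]
  have hφ₁φ₂ : wedgeC (φ₁ ᵥ* P01 J) (φ₂ ᵥ* P01 J) = 0 := by
    ext p q; simp [h₁, wedgeC]
  rw [dC_iwasawaD, proj02_add, proj02_smul, proj02_smul, proj02_wedgeC, proj02_wedgeC, hφ₁φ₂,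
    hstar₁, hstar₂, smul_zero, zero_add]

lemma wedgeC_star_φ₁_star_ω₂_ne_zero : wedgeC (star φ₁) (star ω₂) ≠ 0 := by
  intro h
  simpa [wedgeC, φ₁, ω₂] using congrFun (congrFun h 0) 2

lemma nijRank_iwasawaD {J : Matrix (Fin 6) (Fin 6) ℝ} (h₁ : φ₁ ᵥ* P01 J = 0)
    (h₂ : ω₂ ᵥ* P01 J = 0) (h₃ : φ₃ ᵥ* P01 J = 0) :
    nijRank iwasawaD J = 1 := by
  refine finrank_span_eq_one_of_subset_of_mem wedgeC_star_φ₁_star_ω₂_ne_zero ?_ ?_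
  · rintro _ ⟨α, -, rfl⟩
    rw [proj02_dC_iwasawaD h₁ h₂ h₃]
    exact Submodule.smul_mem _ _ (Submodule.mem_span_singleton_self _)
  · have h : proj02 J (dC iwasawaD ω₂) = -wedgeC (star φ₁) (star ω₂) := by
      rw [proj02_dC_iwasawaD h₁ h₂ h₃]
      simp [ω₂]
    rw [← neg_neg (wedgeC _ _), ← h]
    exact Submodule.neg_mem _ (Submodule.subset_span ⟨_, h₂, rfl⟩)

def J₀ : Matrix (Fin 6) (Fin 6) ℝ :=
  !![0,-1,0,0,0,0; 1,0,0,0,0,0; 0,0,0,-1,0,2; 0,0,1,0,2,0; 0,0,0,0,0,-1; 0,0,0,0,1,0]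

lemma J₀_mul_self : J₀ * J₀ = -1 := by
  ext i j
  fin_cases i <;> fin_cases j <;> simp [J₀, Matrix.mul_apply, Fin.sum_univ_six]

lemma φ₁_vecMul_P01_J₀ : φ₁ ᵥ* P01 J₀ = 0 := by
  rw [vecMul_P01_eq_zero_iff]
  ext j; fin_cases j <;> simp [φ₁, J₀, cplx, vecMul, dotProduct, Fin.sum_univ_six]

lemma ω₂_vecMul_P01_J₀ : ω₂ ᵥ* P01 J₀ = 0 := by
  rw [vecMul_P01_eq_zero_iff]
  ext j; fin_cases j <;> simp [ω₂, J₀, cplx, vecMul, dotProduct, Fin.sum_univ_six] <;> ring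

lemma φ₃_vecMul_P01_J₀ : φ₃ ᵥ* P01 J₀ = 0 := by
  rw [vecMul_P01_eq_zero_iff]
  ext j; fin_cases j <;> simp [φ₃, J₀, cplx, vecMul, dotProduct, Fin.sum_univ_six]

end Iwasawa

/-- On the Iwasawa Lie algebra (`φ¹ = e¹ + ie²`, `φ² = e³ + ie⁴`, `φ³ = e⁵ + ie⁶`,
`dφ¹ = dφ² = 0`, `dφ³ = -φ¹∧φ²`), the almost complex structure defined by declaring
`ω¹ = φ¹`, `ω² = φ² + φ̄³`, `ω³ = φ³` to be the `(1,0)`-forms is well-defined and has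
Nijenhuis rank exactly `1`. -/
theorem iwasawa_rank_one :
    (∃ J : Matrix (Fin 6) (Fin 6) ℝ, J * J = -1 ∧
      Matrix.vecMul (![1, Complex.I, 0, 0, 0, 0]) (P01 J) = 0 ∧
      Matrix.vecMul (![0, 0, 1, Complex.I, 1, -Complex.I]) (P01 J) = 0 ∧
      Matrix.vecMul (![0, 0, 0, 0, 1, Complex.I]) (P01 J) = 0) ∧
    ∀ J : Matrix (Fin 6) (Fin 6) ℝ, J * J = -1 →
      Matrix.vecMul (![1, Complex.I, 0, 0, 0, 0]) (P01 J) = 0 →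
      Matrix.vecMul (![0, 0, 1, Complex.I, 1, -Complex.I]) (P01 J) = 0 →
      Matrix.vecMul (![0, 0, 0, 0, 1, Complex.I]) (P01 J) = 0 →
      nijRank ![0, 0, 0, 0, -(wR 0 2) + wR 1 3, -(wR 0 3) - wR 1 2] J = 1 :=
  ⟨⟨J₀, J₀_mul_self, φ₁_vecMul_P01_J₀, ω₂_vecMul_P01_J₀, φ₃_vecMul_P01_J₀⟩,
    fun _ _ h₁ h₂ h₃ => nijRank_iwasawaD h₁ h₂ h₃⟩
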